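/- arXiv:math/9903026 — 7 statements merged into one kernel-verified Lean document; each statement's English description precedes it below -/
import Mathlib

section
/- Let F = (p,q) : ℝ² → ℝ² be Pinchuk's map and let C = Φ(ℝ) ⊆ ℝ² where Φ(s) = (s² + 2s, u(s² + s, s)). Then for every point v ∈ C \ {(−1,0), (0,0)}, the fiber F⁻¹(v) has exactly 1 element. -/
noncomputable section

/-- The Pinchuk auxiliary polynomial `t = xy - 1`. -/
def pT (x y : ℝ) : ℝ := x * y - 1

/-- The Pinchuk auxiliary polynomial `h = t(xt + 1)`. -/
def pH (x y : ℝ) : ℝ := pT x y * (x * pT x y + 1)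

/-- The Pinchuk auxiliary polynomial `f = (xt+1)^2 (t^2 + y)`. -/
def pF (x y : ℝ) : ℝ := (x * pT x y + 1) ^ 2 * ((pT x y) ^ 2 + y)

/-- The Pinchuk polynomial `u(f,h)`. -/
def pU (f h : ℝ) : ℝ :=
  (1/4) * f * (75*f^3 + 300*f^2*h + 450*f*h^2 + 276*f^2 + 828*f*h + 48*h^2 + 364*f + 48*h)

/-- Pinchuk's map `F = (p, q) : ℝ² → ℝ²` with `p = f + h` and
    `q = -t² - 6th(h+1) + u(f,h)`. -/
def pinchuk : ℝ × ℝ → ℝ × ℝ := fun v =>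
  (pF v.1 v.2 + pH v.1 v.2,
   -(pT v.1 v.2)^2 - 6 * pT v.1 v.2 * pH v.1 v.2 * (pH v.1 v.2 + 1)
     + pU (pF v.1 v.2) (pH v.1 v.2))

/-- The parameterization `Φ(s) = (s² + 2s, u(s² + s, s))`. -/
def Phi (s : ℝ) : ℝ × ℝ := (s^2 + 2*s, pU (s^2 + s) s)

/-- A continuous map `g : X → Y` is *not proper at* `y ∈ Y` if there is no
    neighborhood `U` of `y` such that `g ⁻¹(cl U)` is compact. -/
def NotProperAt {X Y : Type*} [TopologicalSpace X] [TopologicalSpace Y]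
    (g : X → Y) (y : Y) : Prop :=
  ¬ ∃ U ∈ nhds y, IsCompact (g ⁻¹' closure U)

/-!
On the line `p = S` put `f = S - h` and `d = f - h² - h`. The identity `t f = h d` turns `f² q` into
a polynomial `P_S(h)`, so where `f ≠ 0` the map reads `(x, y) ↦ (S, P_S(h) / (S - h)²)`, and `(x, y)`
is recovered from `(f, h)`. Since `P_S'(h) (S - h) + 2 P_S(h)` is minus a sum of squares,
`h ↦ P_S(h) / (S - h)²` is strictly monotone on each side of `S`.

The point `Φ(s)` is the value of this function at `h = s`, a root of `d`, where no point of the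
plane lies. By monotonicity the value is taken nowhere else on the side of `s`, and at most once
on the other side; it is taken there because `P_S(h) - q(Φ(s)) (S - h)²` is negative near `S` and has
even degree and positive leading coefficient. The solution is not the other root `-s - 2` of `d`
by a direct computation.
-/

open Polynomial Set Filter

section Monotone

variable {P P' : ℝ → ℝ} {S : ℝ}

theorem hasDerivAt_div_sq_sub {h : ℝ} (hP : HasDerivAt P (P' h) h) (hh : h ≠ S) :
    HasDerivAt (fun h => P h / (S - h) ^ 2) ((P' h * (S - h) + 2 * P h) / (S - h) ^ 3) h := by
  have hS : S - h ≠ 0 := sub_ne_zero.2 hh.symm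
  refine (hP.div (((hasDerivAt_id h).const_sub S).pow 2) (pow_ne_zero 2 hS)).congr_deriv ?_
  simp only [Pi.pow_apply, id]
  field_simp
  ring

theorem strictAntiOn_div_sq_sub (hP : ∀ h, HasDerivAt P (P' h) h)
    (hneg : ∀ h ≠ S, P' h * (S - h) + 2 * P h < 0) :
    StrictAntiOn (fun h => P h / (S - h) ^ 2) (Iio S) := by
  refine strictAntiOn_of_hasDerivWithinAt_neg (convex_Iio S)
    (f' := fun h => (P' h * (S - h) + 2 * P h) / (S - h) ^ 3)
    (fun h hh => (hasDerivAt_div_sq_sub (hP h) (ne_of_lt hh)).continuousAt.continuousWithinAt)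
    (fun h hh => ?_) (fun h hh => ?_) <;> rw [interior_Iio] at hh
  · exact (hasDerivAt_div_sq_sub (hP h) hh.ne).hasDerivWithinAt
  · exact div_neg_of_neg_of_pos (hneg h hh.ne) (pow_pos (sub_pos.2 hh) 3)

theorem strictMonoOn_div_sq_sub (hP : ∀ h, HasDerivAt P (P' h) h)
    (hneg : ∀ h ≠ S, P' h * (S - h) + 2 * P h < 0) :
    StrictMonoOn (fun h => P h / (S - h) ^ 2) (Ioi S) := by
  refine strictMonoOn_of_hasDerivWithinAt_pos (convex_Ioi S)
    (f' := fun h => (P' h * (S - h) + 2 * P h) / (S - h) ^ 3)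
    (fun h hh => (hasDerivAt_div_sq_sub (hP h) (ne_of_gt hh)).continuousAt.continuousWithinAt)
    (fun h hh => ?_) (fun h hh => ?_) <;> rw [interior_Ioi] at hh
  · exact (hasDerivAt_div_sq_sub (hP h) hh.ne').hasDerivWithinAt
  · exact div_pos_of_neg_of_neg (hneg h hh.ne') (Odd.pow_neg (by decide) (sub_neg.2 hh))

end Monotone

theorem eq_of_apply_eq_of_injOn_Iio_Ioi {α β : Type*} [LinearOrder α] {g : α → β} {S a b c : α}
    (hl : InjOn g (Iio S)) (hr : InjOn g (Ioi S)) (ha : a ≠ S) (hb : b ≠ S) (hc : c ≠ S)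
    (hac : a ≠ c) (hbc : b ≠ c) (hga : g a = g c) (hgb : g b = g c) : a = b := by
  rcases ha.lt_or_gt with ha | ha <;> rcases hb.lt_or_gt with hb | hb
  · exact hl ha hb (hga.trans hgb.symm)
  · rcases hc.lt_or_gt with hc | hc
    exacts [(hac (hl ha hc hga)).elim, (hbc (hr hb hc hgb)).elim]
  · rcases hc.lt_or_gt with hc | hc
    exacts [(hbc (hl hb hc hgb)).elim, (hac (hr ha hc hga)).elim]
  · exact hr ha hb (hga.trans hgb.symm)

theorem Polynomial.exists_isRoot_gt {P : ℝ[X]} (hdeg : 0 < P.natDegree)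
    (hlc : 0 < P.leadingCoeff) {a : ℝ} (ha : P.eval a < 0) : ∃ r, a < r ∧ P.IsRoot r := by
  obtain ⟨b, hab, hb⟩ := ((eventually_gt_atTop a).and ((P.tendsto_atTop_of_leadingCoeff_nonneg
    (natDegree_pos_iff_degree_pos.1 hdeg) hlc.le).eventually_gt_atTop 0)).exists
  obtain ⟨r, hr, hPr⟩ := intermediate_value_Ioo hab.le P.continuous.continuousOn ⟨ha, hb⟩
  exact ⟨r, hr.1, hPr⟩

theorem Polynomial.exists_isRoot_lt {P : ℝ[X]} (hdeg : 0 < P.natDegree)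
    (heven : Even P.natDegree) (hlc : 0 < P.leadingCoeff) {a : ℝ} (ha : P.eval a < 0) :
    ∃ r, r < a ∧ P.IsRoot r := by
  obtain ⟨r, hr, hPr⟩ := (P.comp (-X)).exists_isRoot_gt
    (by rw [natDegree_comp, natDegree_neg, natDegree_X, mul_one]; exact hdeg)
    (by rw [comp_neg_X_leadingCoeff_eq, heven.neg_one_pow, one_mul]; exact hlc)
    (a := -a) (by simpa using ha)
  exact ⟨-r, by linarith, by simpa using hPr⟩

section Identities

variable (x y : ℝ)

/-- The factor `d = (xt + 1)(t² + y)` of `f = (xt + 1) d`. -/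
def pD : ℝ := pF x y - pH x y ^ 2 - pH x y

theorem mul_pD_eq_pF : (x * pT x y + 1) * pD x y = pF x y := by
  unfold pD pF pH pT; ring

theorem pT_mul_pF_eq : pT x y * pF x y = pH x y * pD x y := by
  unfold pD pF pH pT; ring

theorem pF_sq_mul_eq : pF x y ^ 2 * y = pD x y ^ 2 * (pF x y - pH x y ^ 2) := by
  unfold pD pF pH pT; ring

theorem mul_pD_sq_mul_pH_eq : x * pD x y ^ 2 * pH x y = pF x y * pH x y * (pH x y + 1) := by
  unfold pD pF pH pT; ring

theorem pD_ne_zero {x y : ℝ} (hf : pF x y ≠ 0) : pD x y ≠ 0 := fun hd =>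
  hf (by rw [← mul_pD_eq_pF, hd, mul_zero])

theorem mul_eq_one_of_pH_eq_zero {x y : ℝ} (hh : pH x y = 0) (hf : pF x y ≠ 0) : x * y = 1 := by
  have ht : pT x y * pF x y = 0 := by rw [pT_mul_pF_eq, hh, zero_mul]
  have := (mul_eq_zero.1 ht).resolve_right hf
  unfold pT at this
  linarith

end Identities

theorem eq_of_pF_eq_of_pH_eq {w₁ w₂ : ℝ × ℝ} (hF : pF w₁.1 w₁.2 = pF w₂.1 w₂.2)
    (hH : pH w₁.1 w₁.2 = pH w₂.1 w₂.2) (hf : pF w₁.1 w₁.2 ≠ 0) : w₁ = w₂ := by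
  have hD : pD w₁.1 w₁.2 = pD w₂.1 w₂.2 := by simp only [pD, hF, hH]
  have hy : w₁.2 = w₂.2 := by
    have h₁ := pF_sq_mul_eq w₁.1 w₁.2
    rw [hF, hD, hH, ← pF_sq_mul_eq] at h₁
    exact mul_left_cancel₀ (pow_ne_zero 2 (hF ▸ hf)) h₁
  refine Prod.ext ?_ hy
  by_cases hh : pH w₁.1 w₁.2 = 0
  · have h₁ := mul_eq_one_of_pH_eq_zero hh hf
    have h₂ := mul_eq_one_of_pH_eq_zero (hH ▸ hh) (hF ▸ hf)
    rw [← hy] at h₂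
    exact mul_right_cancel₀ (right_ne_zero_of_mul_eq_one h₁) (h₁.trans h₂.symm)
  · have h₁ := mul_pD_sq_mul_pH_eq w₁.1 w₁.2
    rw [hF, hD, hH, ← mul_pD_sq_mul_pH_eq] at h₁
    exact mul_right_cancel₀ (pow_ne_zero 2 (pD_ne_zero (hF ▸ hf)))
      (mul_right_cancel₀ (hH ▸ hh) h₁)

/-- `f² q` on the line `p = S`, as a polynomial in `h`; here `f = S - h` and `d = S - 2h - h²`. -/
def qPoly (S : ℝ) : ℝ[X] :=
  -X ^ 2 * (C S - 2 * X - X ^ 2) ^ 2 - 6 * X ^ 2 * (X + 1) * (C S - 2 * X - X ^ 2) * (C S - X)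
    + (C S - X) ^ 2 * (C (1 / 4) * (C S - X) * (75 * (C S - X) ^ 3 + 300 * (C S - X) ^ 2 * X
      + 450 * (C S - X) * X ^ 2 + 276 * (C S - X) ^ 2 + 828 * (C S - X) * X + 48 * X ^ 2
      + 364 * (C S - X) + 48 * X))

theorem eval_qPoly (S h : ℝ) : (qPoly S).eval h = -h ^ 2 * (S - 2 * h - h ^ 2) ^ 2
    - 6 * h ^ 2 * (h + 1) * (S - 2 * h - h ^ 2) * (S - h) + (S - h) ^ 2 * pU (S - h) h := by
  simp [qPoly, pU]

theorem derivative_qPoly_mul_add (S h : ℝ) :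
    (qPoly S).derivative.eval h * (S - h) + 2 * (qPoly S).eval h
      = -2 * (h ^ 2 * (h + 1) - h * (S - h) - (S - h) ^ 2 * (15 * h + 13) / 2) ^ 2
        - (S - h) ^ 4 * ((15 * h + 13) ^ 2 + 2) / 2 := by
  simp [qPoly, derivative_pow]
  ring

theorem derivative_qPoly_mul_add_neg {S h : ℝ} (hh : h ≠ S) :
    (qPoly S).derivative.eval h * (S - h) + 2 * (qPoly S).eval h < 0 := by
  have : 0 < (S - h) ^ 4 * ((15 * h + 13) ^ 2 + 2) := by
    have : S - h ≠ 0 := sub_ne_zero.2 hh.symm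
    positivity
  rw [derivative_qPoly_mul_add]
  nlinarith [sq_nonneg (h ^ 2 * (h + 1) - h * (S - h) - (S - h) ^ 2 * (15 * h + 13) / 2)]

/-- The second coordinate of Pinchuk's map at a point with `p = S` and `h = h` (when `f ≠ 0`). -/
def qOnLine (S h : ℝ) : ℝ := (qPoly S).eval h / (S - h) ^ 2

theorem pF_sq_mul_snd_pinchuk (w : ℝ × ℝ) :
    pF w.1 w.2 ^ 2 * (pinchuk w).2 = (qPoly (pinchuk w).1).eval (pH w.1 w.2) := by
  have htf := pT_mul_pF_eq w.1 w.2
  simp only [pinchuk, eval_qPoly, add_sub_cancel_right]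
  unfold pD at htf
  linear_combination (-(pT w.1 w.2 * pF w.1 w.2 + pH w.1 w.2 * (pF w.1 w.2 - pH w.1 w.2 ^ 2
    - pH w.1 w.2)) - 6 * pH w.1 w.2 * (pH w.1 w.2 + 1) * pF w.1 w.2) * htf

theorem snd_pinchuk_eq_qOnLine {w : ℝ × ℝ} (hf : pF w.1 w.2 ≠ 0) :
    (pinchuk w).2 = qOnLine (pinchuk w).1 (pH w.1 w.2) := by
  have hfh : (pinchuk w).1 - pH w.1 w.2 = pF w.1 w.2 := add_sub_cancel_right _ _
  rw [qOnLine, ← pF_sq_mul_snd_pinchuk, hfh]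
  field_simp

theorem qOnLine_eq_pU {S h : ℝ} (hd : S - 2 * h - h ^ 2 = 0) (hf : S - h ≠ 0) :
    qOnLine S h = pU (S - h) h := by
  rw [qOnLine, eval_qPoly, hd]
  field_simp
  ring

theorem Phi_eq_qOnLine {s : ℝ} (hs : s ^ 2 + s ≠ 0) :
    Phi s = (s ^ 2 + 2 * s, qOnLine (s ^ 2 + 2 * s) s) := by
  have hf : s ^ 2 + 2 * s - s = s ^ 2 + s := by ring
  rw [qOnLine_eq_pU (by ring) (hf ▸ hs), hf]
  rfl

theorem qOnLine_strictAntiOn (S : ℝ) : StrictAntiOn (qOnLine S) (Iio S) :=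
  strictAntiOn_div_sq_sub (qPoly S).hasDerivAt fun _ => derivative_qPoly_mul_add_neg

theorem qOnLine_strictMonoOn (S : ℝ) : StrictMonoOn (qOnLine S) (Ioi S) :=
  strictMonoOn_div_sq_sub (qPoly S).hasDerivAt fun _ => derivative_qPoly_mul_add_neg

theorem sq_add_self_ne_zero {s : ℝ} (hs₀ : s ≠ 0) (hs₁ : s ≠ -1) : s ^ 2 + s ≠ 0 := by
  rw [show s ^ 2 + s = s * (s + 1) by ring]
  exact mul_ne_zero hs₀ fun h => hs₁ (eq_neg_of_add_eq_zero_left h)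

theorem pF_ne_zero_of_pinchuk_eq_Phi {w : ℝ × ℝ} {s : ℝ} (hs₀ : s ≠ 0) (hs₁ : s ≠ -1)
    (hw : pinchuk w = Phi s) : pF w.1 w.2 ≠ 0 := by
  intro hf
  have hh : pH w.1 w.2 ^ 2 * (pH w.1 w.2 + 1) = 0 := by
    have := pT_mul_pF_eq w.1 w.2
    rw [hf, mul_zero, pD, hf] at this
    linear_combination this
  simp only [pinchuk, Phi, Prod.ext_iff, hf, zero_add] at hw
  obtain ⟨hp, hq⟩ := hw
  rcases mul_eq_zero.1 hh with hh | hh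
  · rw [pow_eq_zero_iff two_ne_zero] at hh
    obtain rfl : s = -2 := by
      have := (mul_eq_zero.1 (by linear_combination hh - hp : s * (s + 2) = 0)).resolve_left hs₀
      linarith
    rw [hh] at hq
    norm_num [pU] at hq
    nlinarith [sq_nonneg (pT w.1 w.2)]
  · have : (s + 1) ^ 2 = 0 := by linear_combination hh - hp
    exact hs₁ (by linear_combination (pow_eq_zero_iff two_ne_zero).1 this)

theorem qOnLine_pH_of_pinchuk_eq_Phi {w : ℝ × ℝ} {s : ℝ} (hs₀ : s ≠ 0) (hs₁ : s ≠ -1)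
    (hw : pinchuk w = Phi s) :
    pH w.1 w.2 ≠ s ^ 2 + 2 * s ∧ pH w.1 w.2 ≠ s ∧
      qOnLine (s ^ 2 + 2 * s) (pH w.1 w.2) = qOnLine (s ^ 2 + 2 * s) s := by
  have hf := pF_ne_zero_of_pinchuk_eq_Phi hs₀ hs₁ hw
  have hp : pF w.1 w.2 + pH w.1 w.2 = s ^ 2 + 2 * s := congrArg Prod.fst hw
  have hq := snd_pinchuk_eq_qOnLine hf
  rw [hw, Phi_eq_qOnLine (sq_add_self_ne_zero hs₀ hs₁)] at hq
  refine ⟨fun h => hf (by linarith), fun h => pD_ne_zero hf ?_, hq.symm⟩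
  rw [pD, h]
  linear_combination hp - h

theorem eq_of_pinchuk_eq_Phi {w₁ w₂ : ℝ × ℝ} {s : ℝ} (hs₀ : s ≠ 0) (hs₁ : s ≠ -1)
    (h₁ : pinchuk w₁ = Phi s) (h₂ : pinchuk w₂ = Phi s) : w₁ = w₂ := by
  obtain ⟨hS₁, hs₁', hq₁⟩ := qOnLine_pH_of_pinchuk_eq_Phi hs₀ hs₁ h₁
  obtain ⟨hS₂, hs₂', hq₂⟩ := qOnLine_pH_of_pinchuk_eq_Phi hs₀ hs₁ h₂
  have hsS : s ≠ s ^ 2 + 2 * s := fun h => sq_add_self_ne_zero hs₀ hs₁ (by linarith)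
  have hH := eq_of_apply_eq_of_injOn_Iio_Ioi (qOnLine_strictAntiOn _).injOn
    (qOnLine_strictMonoOn _).injOn hS₁ hS₂ hsS hs₁' hs₂' hq₁ hq₂
  have hp₁ : pF w₁.1 w₁.2 + pH w₁.1 w₁.2 = s ^ 2 + 2 * s := congrArg Prod.fst h₁
  have hp₂ : pF w₂.1 w₂.2 + pH w₂.1 w₂.2 = s ^ 2 + 2 * s := congrArg Prod.fst h₂
  exact eq_of_pF_eq_of_pH_eq (by linarith) hH (pF_ne_zero_of_pinchuk_eq_Phi hs₀ hs₁ h₁)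

/-- Inverse of `(x, y) ↦ (f, h)`, read off from `f² y = d² (f - h²)` and `x d² = f (h + 1)`. -/
def fiberPoint (f h : ℝ) : ℝ × ℝ :=
  (f * (h + 1) / (f - h ^ 2 - h) ^ 2, (f - h ^ 2 - h) ^ 2 * (f - h ^ 2) / f ^ 2)

theorem pinchuk_fiberPoint {f h : ℝ} (hf : f ≠ 0) (hd : f - h ^ 2 - h ≠ 0) :
    pinchuk (fiberPoint f h) = (f + h, qOnLine (f + h) h) := by
  have ht : pT (fiberPoint f h).1 (fiberPoint f h).2 = h * (f - h ^ 2 - h) / f := by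
    simp only [fiberPoint, pT]; field_simp; ring
  have hxt : (fiberPoint f h).1 * pT (fiberPoint f h).1 (fiberPoint f h).2 + 1
      = f / (f - h ^ 2 - h) := by
    rw [ht]; simp only [fiberPoint]; field_simp; ring
  have hH : pH (fiberPoint f h).1 (fiberPoint f h).2 = h := by
    rw [pH, hxt, ht]; field_simp
  have hF : pF (fiberPoint f h).1 (fiberPoint f h).2 = f := by
    rw [pF, hxt, ht]; simp only [fiberPoint]; field_simp; ring
  have hp : (pinchuk (fiberPoint f h)).1 = f + h := by
    simp only [pinchuk, hF, hH]
  refine Prod.ext hp ?_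
  rw [snd_pinchuk_eq_qOnLine (by rwa [hF]), hp, hH]

theorem natDegree_qPoly_sub (S Q : ℝ) : (qPoly S - C Q * (C S - X) ^ 2).natDegree = 6 := by
  unfold qPoly
  compute_degree!

theorem leadingCoeff_qPoly_sub (S Q : ℝ) :
    (qPoly S - C Q * (C S - X) ^ 2).leadingCoeff = 197 / 4 := by
  rw [leadingCoeff, natDegree_qPoly_sub]
  unfold qPoly
  compute_degree!

theorem eval_qPoly_self (S : ℝ) : (qPoly S).eval S = -(S ^ 2 * (S + 1)) ^ 2 := by
  rw [eval_qPoly]; ring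

theorem exists_qOnLine_eq {s : ℝ} (hs₀ : s ≠ 0) (hs₁ : s ≠ -1) :
    ∃ r, r ≠ s ^ 2 + 2 * s ∧ r ≠ s ∧ qOnLine (s ^ 2 + 2 * s) r = qOnLine (s ^ 2 + 2 * s) s := by
  set S := s ^ 2 + 2 * s with hS
  set Q := qOnLine S s
  set g := qPoly S - C Q * (C S - X) ^ 2
  have hg : ∀ r, g.eval r = (qPoly S).eval r - Q * (S - r) ^ 2 := fun r => by simp [g]
  suffices ∃ r, r ≠ S ∧ r ≠ s ∧ g.IsRoot r by
    obtain ⟨r, hrS, hrs, hr⟩ := this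
    refine ⟨r, hrS, hrs, ?_⟩
    rw [qOnLine, div_eq_iff (pow_ne_zero 2 (sub_ne_zero.2 hrS.symm))]
    linarith [hg r, hr.eq_zero]
  have hdeg : 0 < g.natDegree := by rw [natDegree_qPoly_sub]; norm_num
  have hlc : 0 < g.leadingCoeff := by rw [leadingCoeff_qPoly_sub]; norm_num
  by_cases hs₂ : s = -2
  · have hS0 : S = 0 := by rw [hS, hs₂]; norm_num
    have hQ : Q = 208 := by simp only [Q, hS0, hs₂, qOnLine, eval_qPoly, pU]; norm_num
    have hg₀ : g.eval (1 / 2) < 0 := by simp only [hg, hS0, hQ, eval_qPoly, pU]; norm_num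
    obtain ⟨r, hr, hgr⟩ := g.exists_isRoot_gt hdeg hlc hg₀
    exact ⟨r, (show S < r by linarith).ne', (show s < r by linarith).ne', hgr⟩
  have hgS : g.eval S < 0 := by
    have hS0 : S ≠ 0 := by
      rw [hS, show s ^ 2 + 2 * s = s * (s + 2) by ring]
      exact mul_ne_zero hs₀ fun h => hs₂ (by linarith)
    have hS1 : S + 1 ≠ 0 := by
      rw [hS, show s ^ 2 + 2 * s + 1 = (s + 1) ^ 2 by ring]
      exact pow_ne_zero 2 fun h => hs₁ (by linarith)
    rw [hg, eval_qPoly_self, sub_self, zero_pow two_ne_zero, mul_zero, sub_zero, neg_lt_zero]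
    positivity
  rcases (sq_add_self_ne_zero hs₀ hs₁).lt_or_gt with h | h
  · obtain ⟨r, hrS, hgr⟩ := g.exists_isRoot_lt hdeg (by rw [natDegree_qPoly_sub]; decide) hlc hgS
    exact ⟨r, hrS.ne, (hrS.trans (by linarith)).ne, hgr⟩
  · obtain ⟨r, hSr, hgr⟩ := g.exists_isRoot_gt hdeg hlc hgS
    exact ⟨r, hSr.ne', ((show s < S by linarith).trans hSr).ne', hgr⟩

theorem qOnLine_neg_sub_two_ne {s : ℝ} (hs₀ : s ≠ 0) (hs₁ : s ≠ -1) (hs₂ : s ≠ -2) :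
    qOnLine (s ^ 2 + 2 * s) (-s - 2) ≠ qOnLine (s ^ 2 + 2 * s) s := by
  have h₁ : s ^ 2 + 2 * s - (-s - 2) ≠ 0 := by
    rw [show s ^ 2 + 2 * s - (-s - 2) = (s + 1) * (s + 2) by ring]
    exact mul_ne_zero (fun h => hs₁ (by linarith)) fun h => hs₂ (by linarith)
  have h₂ : s ^ 2 + 2 * s - s ≠ 0 := by
    rw [show s ^ 2 + 2 * s - s = s ^ 2 + s by ring]; exact sq_add_self_ne_zero hs₀ hs₁
  rw [qOnLine_eq_pU (by ring) h₁, qOnLine_eq_pU (by ring) h₂, ne_eq, ← sub_eq_zero]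
  have : pU (s ^ 2 + 2 * s - (-s - 2)) (-s - 2) - pU (s ^ 2 + 2 * s - s) s
      = 2 * (s + 1) ^ 3 * (75 * (s + 1) ^ 2 + 29) := by
    unfold pU; ring
  rw [this]
  exact mul_ne_zero (mul_ne_zero two_ne_zero (pow_ne_zero 3 fun h => hs₁ (by linarith)))
    (by positivity)

theorem exists_pinchuk_eq_Phi {s : ℝ} (hs₀ : s ≠ 0) (hs₁ : s ≠ -1) : ∃ w, pinchuk w = Phi s := by
  obtain ⟨r, hrS, hrs, hr⟩ := exists_qOnLine_eq hs₀ hs₁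
  -- `d` vanishes at `h = s` and `h = -s - 2`; for `s = -2` the latter is `S` itself
  have hr' : r ≠ -s - 2 := by
    rintro rfl
    by_cases hs₂ : s = -2
    · exact hrS (by rw [hs₂]; norm_num)
    · exact qOnLine_neg_sub_two_ne hs₀ hs₁ hs₂ hr
  have hd : s ^ 2 + 2 * s - r - r ^ 2 - r ≠ 0 := by
    rw [show s ^ 2 + 2 * s - r - r ^ 2 - r = -((r - s) * (r - (-s - 2))) by ring]
    exact neg_ne_zero.2 (mul_ne_zero (sub_ne_zero.2 hrs) (sub_ne_zero.2 hr'))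
  refine ⟨fiberPoint (s ^ 2 + 2 * s - r) r, ?_⟩
  rw [pinchuk_fiberPoint (sub_ne_zero.2 hrS.symm) hd, sub_add_cancel, hr,
    Phi_eq_qOnLine (sq_add_self_ne_zero hs₀ hs₁)]

/-- For every `v ∈ C \ {(-1,0), (0,0)}`, the fiber `F⁻¹(v)` of Pinchuk's map has
    exactly one element. -/
theorem pinchuk_fiber_one_on_curve :
    ∀ v ∈ Set.range Phi \ {((-1 : ℝ), (0 : ℝ)), ((0 : ℝ), (0 : ℝ))},
      ∃! w : ℝ × ℝ, pinchuk w = v := by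
  rintro _ ⟨⟨s, rfl⟩, hs⟩
  have hs₀ : s ≠ 0 := by rintro rfl; exact hs (by norm_num [Phi, pU])
  have hs₁ : s ≠ -1 := by rintro rfl; exact hs (by norm_num [Phi, pU])
  obtain ⟨w, hw⟩ := exists_pinchuk_eq_Phi hs₀ hs₁
  exact ⟨w, hw, fun w' hw' => eq_of_pinchuk_eq_Phi hs₀ hs₁ hw' hw⟩
end
end

section
/- Let F = (p,q) : ℝ² → ℝ² be Pinchuk's map. Then F⁻¹((−1, 0)) = ∅ and F⁻¹((0, 0)) = ∅; in particular the points (−1,0) and (0,0) are not in the image of F. -/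
noncomputable section

/-- Algebraic core for the fiber over `(-1,0)`. -/
lemma inner_neg_one (t a h f : ℝ) (hha : h = t * a)
    (hkey : (a - 1) * f = a * h * (h + 1))
    (hp : f + h = -1)
    (hq : -t^2 - 6 * t * h * (h + 1) + pU f h = 0) : False := by
  have hfac : (h + 1) * (a * (h + 1) - 1) = 0 := by
    linear_combination (a - 1) * hp - hkey
  rcases mul_eq_zero.mp hfac with h1 | h2
  · -- h = -1, so f = 0, q = -t², hence t = 0, but h = t a = 0 ≠ -1
    have hh : h = -1 := by linarith
    have hf : f = 0 := by linarith
    rw [hf, hh] at hq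
    simp only [pU] at hq
    have ht : t = 0 := by nlinarith [sq_nonneg t]
    rw [ht] at hha
    simp at hha
    linarith [hha, hh]
  · have hA : a * (h + 1) = 1 := by linarith
    have ht : t = h * (h + 1) := by
      linear_combination -(t * hA) - (h + 1) * hha
    have hf : f = -1 - h := by linarith
    rw [ht, hf] at hq
    simp only [pU] at hq
    have hfin : (h + 1)^2 * ((197 * h + 177)^2 + 782) = 0 := by
      linear_combination (788 : ℝ) * hq
    have h2 : (h + 1)^2 = 0 := by
      rcases mul_eq_zero.mp hfin with h3 | h3
      · exact h3
      · nlinarith [sq_nonneg (197 * h + 177)]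
    have : h + 1 = 0 := by
      exact (pow_eq_zero_iff two_ne_zero).mp h2
    rw [this] at hA
    simp at hA

/-- Algebraic core for the fiber over `(0,0)`. -/
lemma inner_zero (x y t a h f : ℝ) (ht : t = x * y - 1) (ha : a = x * t + 1)
    (hha : h = t * a)
    (hkey : (a - 1) * f = a * h * (h + 1))
    (hfy : f = a^2 * (t^2 + y))
    (hp : f + h = 0)
    (hq : -t^2 - 6 * t * h * (h + 1) + pU f h = 0) : False := by
  have hfac : h * (a * (h + 2) - 1) = 0 := by
    linear_combination (a - 1) * hp - hkey
  have hcase0 : h = 0 → False := by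
    intro hh
    have hf : f = 0 := by linarith
    rw [hf, hh] at hq
    simp only [pU] at hq
    have ht0 : t = 0 := by nlinarith [sq_nonneg t]
    rw [ht0] at ha
    have ha1 : a = 1 := by linarith
    rw [ht0, ha1, hf] at hfy
    have hy : y = 0 := by nlinarith [hfy]
    rw [ht0, hy] at ht
    nlinarith [ht]
  rcases mul_eq_zero.mp hfac with h1 | h2
  · exact hcase0 h1
  · have hA : a * (h + 2) = 1 := by linarith
    have ht2 : t = h * (h + 2) := by
      linear_combination -(t * hA) - (h + 2) * hha
    have hf : f = -h := by linarith
    rw [ht2, hf] at hq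
    simp only [pU] at hq
    have hfin : h^2 * ((197 * h + 208)^2 + 6380) = 0 := by
      linear_combination (788 : ℝ) * hq
    have h3 : h = 0 := by
      have h4 : h^2 = 0 := by
        rcases mul_eq_zero.mp hfin with h5 | h5
        · exact h5
        · nlinarith [sq_nonneg (197 * h + 208)]
      exact (pow_eq_zero_iff two_ne_zero).mp h4
    exact hcase0 h3

lemma pinchuk_ne_neg_one (v : ℝ × ℝ) : pinchuk v ≠ ((-1 : ℝ), (0 : ℝ)) := by
  obtain ⟨x, y⟩ := v
  intro hP
  simp only [pinchuk, Prod.mk.injEq] at hP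
  obtain ⟨hp, hq⟩ := hP
  exact inner_neg_one (pT x y) (x * pT x y + 1) (pH x y) (pF x y)
    (by simp only [pH]) (by simp only [pF, pH, pT]; ring) hp hq

lemma pinchuk_ne_zero (v : ℝ × ℝ) : pinchuk v ≠ ((0 : ℝ), (0 : ℝ)) := by
  obtain ⟨x, y⟩ := v
  intro hP
  simp only [pinchuk, Prod.mk.injEq] at hP
  obtain ⟨hp, hq⟩ := hP
  exact inner_zero x y (pT x y) (x * pT x y + 1) (pH x y) (pF x y)
    (by simp only [pT]) rfl (by simp only [pH]) (by simp only [pF, pH, pT]; ring)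
    (by simp only [pF, pT]) hp hq

/-- The points `(-1, 0)` and `(0, 0)` have empty fibers; in particular they are not
    in the image of Pinchuk's map. -/
theorem pinchuk_fiber_empty :
    pinchuk ⁻¹' {((-1 : ℝ), (0 : ℝ))} = ∅ ∧ pinchuk ⁻¹' {((0 : ℝ), (0 : ℝ))} = ∅ ∧
      ((-1 : ℝ), (0 : ℝ)) ∉ Set.range pinchuk ∧ ((0 : ℝ), (0 : ℝ)) ∉ Set.range pinchuk := by
  refine ⟨?_, ?_, ?_, ?_⟩
  · ext v
    simp only [Set.mem_preimage, Set.mem_singleton_iff, Set.mem_empty_iff_false, iff_false]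
    exact pinchuk_ne_neg_one v
  · ext v
    simp only [Set.mem_preimage, Set.mem_singleton_iff, Set.mem_empty_iff_false, iff_false]
    exact pinchuk_ne_zero v
  · rintro ⟨v, hv⟩
    exact pinchuk_ne_neg_one v hv
  · rintro ⟨v, hv⟩
    exact pinchuk_ne_zero v hv
end
end

section
/- Pinchuk's map F = (p,q) : ℝ² → ℝ² has everywhere nonvanishing Jacobian determinant (so F is a local diffeomorphism), yet F is not injective, hence F is not a global diffeomorphism of ℝ². -/
/-!
Write `F = G ∘ (t, h, f)` with `G(t, h, f) = (f + h, -t² - 6th(h + 1) + u(f, h))`. By the chain rule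
`det DF` is a combination of the Jacobian brackets `{t, h} = t - h`, `{t, f} = f - 2h - 3h²` and
`{f, h} = -f`, and the polynomial relation `f (h - t) = h² (h + 1)` turns it into the sum of squares
`t² + (t + f (13 + 15h))² + f²`. It never vanishes: `t = 0` forces `xy = 1`, hence `f = y ≠ 0`.
-/

noncomputable section

open Function ContinuousLinearMap

def jac (a b : (ℝ × ℝ) →L[ℝ] ℝ) : ℝ := a (1, 0) * b (0, 1) - a (0, 1) * b (1, 0)

theorem det_prod_eq_jac (a b : (ℝ × ℝ) →L[ℝ] ℝ) :
    LinearMap.det ((a.prod b : (ℝ × ℝ) →L[ℝ] ℝ × ℝ) : (ℝ × ℝ) →ₗ[ℝ] ℝ × ℝ) = jac a b := by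
  rw [← LinearMap.det_toMatrix (Module.Basis.finTwoProd ℝ), Matrix.det_fin_two]
  simp [jac, LinearMap.toMatrix_apply, Module.Basis.coe_finTwoProd_repr]

theorem jac_add_smul_add (a b c : (ℝ × ℝ) →L[ℝ] ℝ) (α β γ : ℝ) :
    jac (a + b) (α • c + β • b + γ • a) = (β - γ) * jac a b - α * (jac c a + jac c b) := by
  simp only [jac, add_apply, smul_apply, smul_eq_mul]
  ring

def lin2 (a b : ℝ) : (ℝ × ℝ) →L[ℝ] ℝ := a • fst ℝ ℝ ℝ + b • snd ℝ ℝ ℝ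

@[simp] theorem lin2_apply (a b : ℝ) (u : ℝ × ℝ) : lin2 a b u = a * u.1 + b * u.2 := by
  simp [lin2]

theorem jac_lin2 (a b c d : ℝ) : jac (lin2 a b) (lin2 c d) = a * d - b * c := by
  simp [jac]

theorem hasFDerivAt_pT (x y : ℝ) : HasFDerivAt (uncurry pT) (lin2 y x) (x, y) := by
  refine ((hasFDerivAt_fst.mul hasFDerivAt_snd).sub_const 1).congr_fderiv ?_
  ext <;> simp

theorem hasFDerivAt_pH (x y : ℝ) :
    HasFDerivAt (uncurry pH)
      (lin2 (y * (x * pT x y + 1) + pT x y * (pT x y + x * y))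
        (x * (x * pT x y + 1) + pT x y * x ^ 2)) (x, y) := by
  have ht := hasFDerivAt_pT x y
  refine (ht.mul ((hasFDerivAt_fst.mul ht).add_const 1)).congr_fderiv ?_
  ext <;> simp <;> ring

theorem hasFDerivAt_pF (x y : ℝ) :
    HasFDerivAt (uncurry pF)
      (lin2 (2 * (x * pT x y + 1) * (pT x y + x * y) * (pT x y ^ 2 + y)
          + (x * pT x y + 1) ^ 2 * (2 * pT x y * y))
        (2 * (x * pT x y + 1) * x ^ 2 * (pT x y ^ 2 + y)
          + (x * pT x y + 1) ^ 2 * (2 * pT x y * x + 1))) (x, y) := by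
  have ht := hasFDerivAt_pT x y
  refine ((((hasFDerivAt_fst.mul ht).add_const 1).pow 2).mul
    ((ht.pow 2).add hasFDerivAt_snd)).congr_fderiv ?_
  ext <;> simp <;> ring

def pUf (f h : ℝ) : ℝ :=
  (1/4) * (300*f^3 + 900*f^2*h + 900*f*h^2 + 828*f^2 + 1656*f*h + 48*h^2 + 728*f + 48*h)

def pUh (f h : ℝ) : ℝ :=
  (1/4) * (300*f^3 + 900*f^2*h + 828*f^2 + 96*f*h + 48*f)

theorem hasFDerivAt_pU (f h : ℝ) : HasFDerivAt (uncurry pU) (lin2 (pUf f h) (pUh f h)) (f, h) := by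
  have hf : HasFDerivAt (fun v : ℝ × ℝ => v.1) (fst ℝ ℝ ℝ) (f, h) := hasFDerivAt_fst
  have hh : HasFDerivAt (fun v : ℝ × ℝ => v.2) (snd ℝ ℝ ℝ) (f, h) := hasFDerivAt_snd
  have hP := (hf.pow 3).const_mul 75
    |>.add (((hf.pow 2).const_mul 300).mul hh) |>.add ((hf.const_mul 450).mul (hh.pow 2))
    |>.add ((hf.pow 2).const_mul 276) |>.add ((hf.const_mul 828).mul hh)
    |>.add ((hh.pow 2).const_mul 48) |>.add (hf.const_mul 364) |>.add (hh.const_mul 48)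
  refine ((hf.const_mul (1/4)).mul hP).congr_fderiv ?_
  ext <;> simp [pUf, pUh] <;> ring

theorem hasFDerivAt_pinchuk {v : ℝ × ℝ} {t' h' f' : (ℝ × ℝ) →L[ℝ] ℝ}
    (ht : HasFDerivAt (uncurry pT) t' v) (hh : HasFDerivAt (uncurry pH) h' v)
    (hf : HasFDerivAt (uncurry pF) f' v) :
    HasFDerivAt pinchuk ((f' + h').prod
      ((-2 * pT v.1 v.2 - 6 * pH v.1 v.2 * (pH v.1 v.2 + 1)) • t'
        + (pUh (pF v.1 v.2) (pH v.1 v.2) - 6 * pT v.1 v.2 * (2 * pH v.1 v.2 + 1)) • h'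
        + pUf (pF v.1 v.2) (pH v.1 v.2) • f')) v := by
  have hU := (hasFDerivAt_pU (pF v.1 v.2) (pH v.1 v.2)).comp v (hf.prodMk hh)
  refine ((hf.add hh).prodMk (((ht.pow 2).neg.sub
    (((ht.const_mul 6).mul hh).mul (hh.add_const 1))).add hU)).congr_fderiv ?_
  ext <;> simp [uncurry] <;> ring

theorem jac_fderiv_pT_pH (x y : ℝ) :
    jac (fderiv ℝ (uncurry pT) (x, y)) (fderiv ℝ (uncurry pH) (x, y)) = pT x y - pH x y := by
  rw [(hasFDerivAt_pT x y).fderiv, (hasFDerivAt_pH x y).fderiv, jac_lin2]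
  simp only [pH, pT]
  ring

theorem jac_fderiv_pT_pF (x y : ℝ) :
    jac (fderiv ℝ (uncurry pT) (x, y)) (fderiv ℝ (uncurry pF) (x, y))
      = pF x y - 2 * pH x y - 3 * pH x y ^ 2 := by
  rw [(hasFDerivAt_pT x y).fderiv, (hasFDerivAt_pF x y).fderiv, jac_lin2]
  simp only [pF, pH, pT]
  ring

theorem jac_fderiv_pF_pH (x y : ℝ) :
    jac (fderiv ℝ (uncurry pF) (x, y)) (fderiv ℝ (uncurry pH) (x, y)) = -pF x y := by
  rw [(hasFDerivAt_pF x y).fderiv, (hasFDerivAt_pH x y).fderiv, jac_lin2]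
  simp only [pF, pT]
  ring

theorem pF_mul_pH_sub_pT (x y : ℝ) : pF x y * (pH x y - pT x y) = pH x y ^ 2 * (pH x y + 1) := by
  simp only [pF, pH, pT]
  ring

theorem pinchuk_jacobian_identity {t h f : ℝ} (hrel : f * (h - t) = h ^ 2 * (h + 1)) :
    (pUh f h - 6 * t * (2 * h + 1) - pUf f h) * -f
        - (-2 * t - 6 * h * (h + 1)) * (f - 2 * h - 3 * h ^ 2 + (t - h))
      = t ^ 2 + (t + f * (13 + 15 * h)) ^ 2 + f ^ 2 := by
  simp only [pUf, pUh]
  linear_combination 18 * (1 + h) * hrel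

theorem det_fderiv_pinchuk (x y : ℝ) :
    LinearMap.det (fderiv ℝ pinchuk (x, y) : (ℝ × ℝ) →ₗ[ℝ] ℝ × ℝ)
      = pT x y ^ 2 + (pT x y + pF x y * (13 + 15 * pH x y)) ^ 2 + pF x y ^ 2 := by
  rw [(hasFDerivAt_pinchuk (hasFDerivAt_pT x y).differentiableAt.hasFDerivAt
    (hasFDerivAt_pH x y).differentiableAt.hasFDerivAt
    (hasFDerivAt_pF x y).differentiableAt.hasFDerivAt).fderiv, det_prod_eq_jac,
    jac_add_smul_add, jac_fderiv_pF_pH, jac_fderiv_pT_pF, jac_fderiv_pT_pH]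
  exact pinchuk_jacobian_identity (pF_mul_pH_sub_pT x y)

theorem pT_ne_zero_or_pF_ne_zero (x y : ℝ) : pT x y ≠ 0 ∨ pF x y ≠ 0 := by
  by_cases ht : pT x y = 0
  · have hxy : x * y = 1 := sub_eq_zero.1 ht
    right
    simpa [pF, ht] using right_ne_zero_of_mul_eq_one hxy
  · exact Or.inl ht

-- At both points `f = 0`, `h = -1`, `t = ±1`, and `q` sees `t` only through `t²` and `t h (h + 1)`.
theorem pinchuk_neg_two_neg_one_eq_pinchuk_zero_neg_one : pinchuk (-2, -1) = pinchuk (0, -1) := by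
  norm_num [pinchuk, pT, pH, pF, pU]

/-- Pinchuk's map has everywhere nonvanishing Jacobian determinant (so it is a local
    diffeomorphism), yet it is not injective; hence it is not a global diffeomorphism. -/
theorem pinchuk_jacobian_ne_zero_not_injective :
    (∀ v : ℝ × ℝ, LinearMap.det ((fderiv ℝ pinchuk v) : (ℝ × ℝ) →ₗ[ℝ] (ℝ × ℝ)) ≠ 0) ∧
      ¬ Function.Injective pinchuk := by
  refine ⟨fun ⟨x, y⟩ => ?_, fun hinj => ?_⟩
  · rw [det_fderiv_pinchuk]
    rcases pT_ne_zero_or_pF_ne_zero x y with ht | hf <;> positivity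
  · have := hinj pinchuk_neg_two_neg_one_eq_pinchuk_zero_neg_one
    norm_num at this
end
end

section
/- Consider the map (f, h) : ℂ² → ℂ² given by the Pinchuk polynomials f and h, and let B = {(F̄, H̄) ∈ ℂ² : F̄·(F̄ − H̄(H̄ + 1)) = 0}. Then the restriction of (f, h) from ℂ² \ f⁻¹(0) to ℂ² \ B is a homeomorphism (in particular it is a bijection between these sets). -/
noncomputable section

/-- The complex Pinchuk auxiliary polynomial `t = xy - 1`. -/
def cT (x y : ℂ) : ℂ := x * y - 1

/-- The complex Pinchuk auxiliary polynomial `h = t(xt + 1)`. -/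
def cH (x y : ℂ) : ℂ := cT x y * (x * cT x y + 1)

/-- The complex Pinchuk auxiliary polynomial `f = (xt+1)^2 (t^2 + y)`. -/
def cF (x y : ℂ) : ℂ := (x * cT x y + 1) ^ 2 * ((cT x y) ^ 2 + y)

/-- The complex Pinchuk polynomial `u(f,h)`. -/
def cU (f h : ℂ) : ℂ :=
  (1/4) * f * (75*f^3 + 300*f^2*h + 450*f*h^2 + 276*f^2 + 828*f*h + 48*h^2 + 364*f + 48*h)

/-- The complexification `ℂF : ℂ² → ℂ²` of Pinchuk's map, given by the same
    polynomials `p = f + h` and `q = -t² - 6th(h+1) + u(f,h)`. -/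
def cPinchuk : ℂ × ℂ → ℂ × ℂ := fun v =>
  (cF v.1 v.2 + cH v.1 v.2,
   -(cT v.1 v.2)^2 - 6 * cT v.1 v.2 * cH v.1 v.2 * (cH v.1 v.2 + 1)
     + cU (cF v.1 v.2) (cH v.1 v.2))

/-- The map `(f, h) : ℂ² → ℂ²`. -/
def cfh : ℂ × ℂ → ℂ × ℂ := fun v => (cF v.1 v.2, cH v.1 v.2)

/-- The set `B = {(F̄, H̄) ∈ ℂ² : F̄(F̄ - H̄(H̄+1)) = 0}`. -/
def setB : Set (ℂ × ℂ) := {w | w.1 * (w.1 - w.2 * (w.2 + 1)) = 0}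

/-!
Put `a = xt + 1` and `s = t² + y`. Then `f = a²s`, `h + 1 = xs`, `f - h(h+1) = as` and
`f - h² = a²y`, so where `f ≠ 0` the values of `f` and `h` recover `a = f/D` and `s = D²/f`
with `D = f - h(h+1)`, and from them `x` and `y`. This rational inverse is regular exactly off
`B`, and it maps `ℂ² \ B` back into `{f ≠ 0}`.
-/

namespace Pinchuk

section Identities

variable (x y : ℂ)

theorem cH_add_one : cH x y + 1 = x * (cT x y ^ 2 + y) := by
  simp only [cH, cT]; ring

theorem cF_sub_cH_mul_cH_add_one :
    cF x y - cH x y * (cH x y + 1) = (x * cT x y + 1) * (cT x y ^ 2 + y) := by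
  simp only [cF, cH, cT]; ring

theorem cF_sub_cH_sq : cF x y - cH x y ^ 2 = (x * cT x y + 1) ^ 2 * y := by
  simp only [cF, cH, cT]; ring

theorem cF_ne_zero_iff : cF x y ≠ 0 ↔ x * cT x y + 1 ≠ 0 ∧ cT x y ^ 2 + y ≠ 0 := by
  simp [cF, not_or]

end Identities

theorem mem_compl_setB_iff {w : ℂ × ℂ} :
    w ∈ setBᶜ ↔ w.1 ≠ 0 ∧ w.1 - w.2 * (w.2 + 1) ≠ 0 := by
  simp [setB, not_or]

theorem cfh_mem_compl_setB {v : ℂ × ℂ} (hv : cF v.1 v.2 ≠ 0) : cfh v ∈ setBᶜ := by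
  obtain ⟨ha, hs⟩ := (cF_ne_zero_iff v.1 v.2).1 hv
  exact mem_compl_setB_iff.2
    ⟨hv, (cF_sub_cH_mul_cH_add_one v.1 v.2).trans_ne (mul_ne_zero ha hs)⟩

def cfhInv (w : ℂ × ℂ) : ℂ × ℂ :=
  ((w.2 + 1) * w.1 / (w.1 - w.2 * (w.2 + 1)) ^ 2,
   (w.1 - w.2 ^ 2) * (w.1 - w.2 * (w.2 + 1)) ^ 2 / w.1 ^ 2)

theorem cfhInv_cfh {v : ℂ × ℂ} (hv : cF v.1 v.2 ≠ 0) : cfhInv (cfh v) = v := by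
  obtain ⟨x, y⟩ := v
  obtain ⟨ha, hs⟩ := (cF_ne_zero_iff x y).1 hv
  simp only [cfhInv, cfh]
  rw [cF_sub_cH_mul_cH_add_one, cF_sub_cH_sq, cH_add_one]
  ext <;> simp only [cF] <;> field_simp

theorem cfh_cfhInv {w : ℂ × ℂ} (hw : w ∈ setBᶜ) : cfh (cfhInv w) = w := by
  obtain ⟨F, H⟩ := w
  obtain ⟨hF, hD⟩ : F ≠ 0 ∧ F - H * (H + 1) ≠ 0 := mem_compl_setB_iff.1 hw
  generalize hxy : cfhInv (F, H) = p
  obtain ⟨x, y⟩ := p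
  obtain ⟨hx, hy⟩ := Prod.ext_iff.1 hxy.symm
  simp only [cfhInv] at hx hy
  set D := F - H * (H + 1)
  have ht : cT x y = H * D / F := by
    rw [cT, hx, hy]; field_simp; ring
  have ha : x * cT x y + 1 = F / D := by
    rw [ht, hx]; field_simp; ring
  have hs : cT x y ^ 2 + y = D ^ 2 / F := by
    rw [ht, hy]; field_simp; ring
  ext
  · rw [cfh, cF, ha, hs]; field_simp
  · rw [cfh, cH, ha, ht]; field_simp

theorem continuous_cfh : Continuous cfh := by
  unfold cfh cF cH cT; fun_prop

theorem continuousOn_cfhInv : ContinuousOn cfhInv setBᶜ := by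
  intro w hw
  obtain ⟨hF, hD⟩ := mem_compl_setB_iff.1 hw
  unfold cfhInv
  fun_prop (disch := simp_all)

def cfhPartialHomeomorph : PartialHomeomorph (ℂ × ℂ) (ℂ × ℂ) where
  toFun := cfh
  invFun := cfhInv
  source := {v | cF v.1 v.2 ≠ 0}
  target := setBᶜ
  map_source' _ := cfh_mem_compl_setB
  map_target' _ hw := (congrArg Prod.fst (cfh_cfhInv hw)).trans_ne (mem_compl_setB_iff.1 hw).1
  left_inv' _ := cfhInv_cfh
  right_inv' _ := cfh_cfhInv
  continuousOn_toFun := continuous_cfh.continuousOn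
  continuousOn_invFun := continuousOn_cfhInv

end Pinchuk

/-- The restriction of `(f, h)` from `ℂ² \ f⁻¹(0)` to `ℂ² \ B` is a homeomorphism. -/
theorem pinchuk_fh_restriction_homeomorph :
    ∃ e : {v : ℂ × ℂ | cF v.1 v.2 ≠ 0} ≃ₜ (setBᶜ : Set (ℂ × ℂ)),
      ∀ v : {v : ℂ × ℂ | cF v.1 v.2 ≠ 0}, (e v : ℂ × ℂ) = cfh v :=
  ⟨Pinchuk.cfhPartialHomeomorph.toHomeomorphSourceTarget, fun _ => rfl⟩
end
end

section
/- Consider the Pinchuk polynomials t, h, f on ℂ². The curve f⁻¹(0) ⊆ ℂ² is the union of the two sets A₁ = (f,h)⁻¹(0, 0) and A₂ = (f,h)⁻¹(0, −1); the restriction of the polynomial function t to Aᵢ is injective with image t(Aᵢ) = ℂ \ {0} for i = 1, 2. Explicitly, A₁ = {(−1/s, −s(s+1)) : s ∈ ℂ \ {0}} and A₂ = {(−(s+1)/s², −s²) : s ∈ ℂ \ {0}}, where s is the value of t. -/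
noncomputable section

/-- `A₁ = (f, h)⁻¹(0, 0)`. -/
def setA1 : Set (ℂ × ℂ) := {v | cF v.1 v.2 = 0 ∧ cH v.1 v.2 = 0}

/-- `A₂ = (f, h)⁻¹(0, -1)`. -/
def setA2 : Set (ℂ × ℂ) := {v | cF v.1 v.2 = 0 ∧ cH v.1 v.2 = -1}

/-!
On `f = 0` one of the factors `x t + 1` and `t² + y` of `f` vanishes. Where `x t + 1 = 0` we get
`h = t (x t + 1) = 0`; where `t² + y = 0` we get `h = x t² + t = -x y + t = -1`. So `A₁` and `A₂`
are exactly the zero sets of the two factors. On each of them `t` cannot vanish, and the equations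
can be solved for `x` and `y` as rational functions of `s = t`; since `t` recovers `s` from the
resulting point, `t` is injective on `Aᵢ` with image `ℂ \ {0}`.
-/

lemma Set.LeftInvOn.image_eq_setOf {α β : Type*} {f' : β → α} {f : α → β} {s : Set α}
    (h : Set.LeftInvOn f' f s) : f '' s = {b | ∃ a, a ∈ s ∧ b = f a ∧ f' b = a} := by
  ext b
  constructor
  · rintro ⟨a, ha, rfl⟩
    exact ⟨a, ha, rfl, h ha⟩
  · rintro ⟨a, ha, rfl, -⟩
    exact ⟨a, ha, rfl⟩

lemma cH_eq_zero_of_mul_cT_add_one_eq_zero {x y : ℂ} (h : x * cT x y + 1 = 0) : cH x y = 0 := by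
  rw [cH, h, mul_zero]

lemma cH_eq_neg_one_of_cT_sq_add_eq_zero {x y : ℂ} (h : cT x y ^ 2 + y = 0) : cH x y = -1 := by
  simp only [cH, cT] at h ⊢
  linear_combination x * h

lemma cF_eq_zero_iff {x y : ℂ} : cF x y = 0 ↔ x * cT x y + 1 = 0 ∨ cT x y ^ 2 + y = 0 := by
  rw [cF, mul_eq_zero, pow_eq_zero_iff two_ne_zero]

lemma mem_setA1_iff {v : ℂ × ℂ} : v ∈ setA1 ↔ v.1 * cT v.1 v.2 + 1 = 0 := by
  refine ⟨fun ⟨hf, hh⟩ => (cF_eq_zero_iff.1 hf).resolve_right fun h => ?_,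
    fun h => ⟨cF_eq_zero_iff.2 (.inl h), cH_eq_zero_of_mul_cT_add_one_eq_zero h⟩⟩
  have := hh.symm.trans (cH_eq_neg_one_of_cT_sq_add_eq_zero h)
  norm_num at this

lemma mem_setA2_iff {v : ℂ × ℂ} : v ∈ setA2 ↔ cT v.1 v.2 ^ 2 + v.2 = 0 := by
  refine ⟨fun ⟨hf, hh⟩ => (cF_eq_zero_iff.1 hf).resolve_left fun h => ?_,
    fun h => ⟨cF_eq_zero_iff.2 (.inr h), cH_eq_neg_one_of_cT_sq_add_eq_zero h⟩⟩
  have := hh.symm.trans (cH_eq_zero_of_mul_cT_add_one_eq_zero h)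
  norm_num at this

def paramA1 (s : ℂ) : ℂ × ℂ := (-1 / s, -s * (s + 1))

def paramA2 (s : ℂ) : ℂ × ℂ := (-(s + 1) / s ^ 2, -s ^ 2)

lemma cT_paramA1 {s : ℂ} (hs : s ≠ 0) : cT (paramA1 s).1 (paramA1 s).2 = s := by
  simp only [paramA1, cT]
  field_simp
  ring

lemma cT_paramA2 {s : ℂ} (hs : s ≠ 0) : cT (paramA2 s).1 (paramA2 s).2 = s := by
  simp only [paramA2, cT]
  field_simp
  ring

lemma mul_cT_add_one_eq_zero_iff {v : ℂ × ℂ} :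
    v.1 * cT v.1 v.2 + 1 = 0 ↔ ∃ s, s ≠ 0 ∧ paramA1 s = v := by
  constructor
  · intro h
    have hs : cT v.1 v.2 ≠ 0 := fun h0 => by simp [h0] at h
    refine ⟨cT v.1 v.2, hs, Prod.ext ?_ ?_⟩
    · simp only [paramA1]
      field_simp
      linear_combination -h
    · simp only [paramA1, cT] at h ⊢
      linear_combination -v.2 * h
  · rintro ⟨s, hs, rfl⟩
    rw [cT_paramA1 hs, paramA1]
    field_simp
    ring

lemma cT_sq_add_eq_zero_iff {v : ℂ × ℂ} :
    cT v.1 v.2 ^ 2 + v.2 = 0 ↔ ∃ s, s ≠ 0 ∧ paramA2 s = v := by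
  constructor
  · intro h
    -- `t = 0` would force `y = -t² = 0` and then `t = x y - 1 = -1`
    have hs : cT v.1 v.2 ≠ 0 := fun h0 => by
      rw [h0, zero_pow two_ne_zero, zero_add] at h
      simp [cT, h] at h0
    refine ⟨cT v.1 v.2, hs, Prod.ext ?_ ?_⟩
    · simp only [paramA2]
      field_simp
      simp only [cT] at h ⊢
      linear_combination -v.1 * h
    · simp only [paramA2]
      linear_combination -h
  · rintro ⟨s, hs, rfl⟩
    rw [cT_paramA2 hs, paramA2]
    ring

lemma setA1_eq_image_paramA1 : setA1 = paramA1 '' {0}ᶜ := by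
  ext v
  exact mem_setA1_iff.trans mul_cT_add_one_eq_zero_iff

lemma setA2_eq_image_paramA2 : setA2 = paramA2 '' {0}ᶜ := by
  ext v
  exact mem_setA2_iff.trans cT_sq_add_eq_zero_iff

/-- The curve `f⁻¹(0) ⊆ ℂ²` is the union of `A₁ = (f,h)⁻¹(0,0)` and
    `A₂ = (f,h)⁻¹(0,-1)`; the restriction of `t` to each `Aᵢ` is injective with image
    `ℂ \ {0}`, and `A₁`, `A₂` are explicitly parameterized by the value `s` of `t`. -/
theorem pinchuk_f_zero_set_description :
    {v : ℂ × ℂ | cF v.1 v.2 = 0} = setA1 ∪ setA2 ∧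
    Set.InjOn (fun v : ℂ × ℂ => cT v.1 v.2) setA1 ∧
    (fun v : ℂ × ℂ => cT v.1 v.2) '' setA1 = {0}ᶜ ∧
    Set.InjOn (fun v : ℂ × ℂ => cT v.1 v.2) setA2 ∧
    (fun v : ℂ × ℂ => cT v.1 v.2) '' setA2 = {0}ᶜ ∧
    setA1 = {w : ℂ × ℂ | ∃ s : ℂ, s ≠ 0 ∧ w = (-1/s, -s*(s+1)) ∧ cT w.1 w.2 = s} ∧
    setA2 = {w : ℂ × ℂ | ∃ s : ℂ, s ≠ 0 ∧ w = (-(s+1)/s^2, -s^2) ∧ cT w.1 w.2 = s} := by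
  have h₁ : Set.LeftInvOn (fun v : ℂ × ℂ => cT v.1 v.2) paramA1 {0}ᶜ := fun _ hs => cT_paramA1 hs
  have h₂ : Set.LeftInvOn (fun v : ℂ × ℂ => cT v.1 v.2) paramA2 {0}ᶜ := fun _ hs => cT_paramA2 hs
  refine ⟨Set.ext fun v => cF_eq_zero_iff.trans (or_congr mem_setA1_iff mem_setA2_iff).symm, ?_⟩
  rw [setA1_eq_image_paramA1, setA2_eq_image_paramA2]
  exact ⟨h₁.rightInvOn_image.injOn, h₁.image_image, h₂.rightInvOn_image.injOn, h₂.image_image,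
    h₁.image_eq_setOf, h₂.image_eq_setOf⟩
end
end

section
/- Let B = {(F̄, H̄) ∈ ℂ² : F̄·(F̄ − H̄(H̄ + 1)) = 0} and define Ψ : ℂ² \ B → ℂ² by Ψ(F̄, H̄) = ((H̄ + 1)·F̄ / (F̄ − H̄(H̄ + 1))², (F̄ − H̄²)·(F̄ − H̄(H̄ + 1))² / F̄²). Then for every (F̄, H̄) ∈ ℂ² \ B one has (f, h)(Ψ(F̄, H̄)) = (F̄, H̄), where (f, h) : ℂ² → ℂ² is the map given by the Pinchuk polynomials f = (xt+1)²(t²+y) and h = t(xt+1) with t = xy − 1. -/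
noncomputable section

/-- The map `Ψ` defined on `ℂ² \ B`, where `B = {F̄(F̄ - H̄(H̄+1)) = 0}`, given by
    `Ψ(F̄, H̄) = ((H̄+1)F̄/(F̄ - H̄(H̄+1))², (F̄ - H̄²)(F̄ - H̄(H̄+1))²/F̄²)`. -/
def Psi (F H : ℂ) : ℂ × ℂ :=
  ((H + 1) * F / (F - H * (H + 1))^2, (F - H^2) * (F - H * (H + 1))^2 / F^2)

/-! At `(x, y) = Ψ(F̄, H̄)`, with `D = F̄ - H̄(H̄+1)`, one finds `t = H̄D/F̄` and `xt + 1 = F̄/D`,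
so `h = t(xt + 1) = H̄`, and `t² + y = D²/F̄` gives `f = (F̄/D)² · D²/F̄ = F̄`. -/

section PsiCoordinates

variable {F H : ℂ}

theorem cT_Psi (hF : F ≠ 0) (hD : F - H * (H + 1) ≠ 0) :
    cT (Psi F H).1 (Psi F H).2 = H * (F - H * (H + 1)) / F := by
  rw [cT, Psi]
  field_simp
  ring

theorem mul_cT_Psi_add_one (hF : F ≠ 0) (hD : F - H * (H + 1) ≠ 0) :
    (Psi F H).1 * cT (Psi F H).1 (Psi F H).2 + 1 = F / (F - H * (H + 1)) := by
  rw [cT_Psi hF hD, Psi]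
  field_simp
  ring

theorem cH_Psi (hF : F ≠ 0) (hD : F - H * (H + 1) ≠ 0) :
    cH (Psi F H).1 (Psi F H).2 = H := by
  rw [cH, mul_cT_Psi_add_one hF hD, cT_Psi hF hD]
  field_simp

theorem cF_Psi (hF : F ≠ 0) (hD : F - H * (H + 1) ≠ 0) :
    cF (Psi F H).1 (Psi F H).2 = F := by
  rw [cF, mul_cT_Psi_add_one hF hD, cT_Psi hF hD]
  simp only [Psi]
  field_simp
  ring

end PsiCoordinates

/-- `Ψ` is a right inverse of `(f, h)` on `ℂ² \ B`:
    for every `(F̄, H̄) ∉ B` one has `(f, h)(Ψ(F̄, H̄)) = (F̄, H̄)`. -/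
theorem pinchuk_fh_section :
    ∀ F H : ℂ, F * (F - H * (H + 1)) ≠ 0 → cfh (Psi F H) = (F, H) := by
  intro F H hFD
  obtain ⟨hF, hD⟩ := mul_ne_zero_iff.mp hFD
  exact Prod.ext (cF_Psi hF hD) (cH_Psi hF hD)
end
end

section
/- The parameterization Φ : ℝ → ℝ², Φ(s) = (s² + 2s, u(s² + s, s)), is injective, and its derivative Φ'(s) vanishes only at s = −1; consequently the curve C = Φ(ℝ) is smooth at every point except (−1, 0) = Φ(−1). -/
noncomputable section

/-- `S` is, near `p`, a smooth curve (a 1-dimensional smooth submanifold of `ℝ²`):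
    locally it is the regular zero set of a smooth real-valued function. -/
def IsSmoothCurveAt (S : Set (ℝ × ℝ)) (p : ℝ × ℝ) : Prop :=
  ∃ U : Set (ℝ × ℝ), IsOpen U ∧ p ∈ U ∧
    ∃ g : ℝ × ℝ → ℝ, ContDiff ℝ (⊤ : ℕ∞) g ∧ (∀ q ∈ U, fderiv ℝ g q ≠ 0) ∧
      S ∩ U = {q ∈ U | g q = 0}

/- Auxiliary polynomials for the implicit equation of the curve. -/
def pA (x : ℝ) : ℝ := 75*x^4 + 276*x^3 + 409*x^2 + 208*x
def pB (x : ℝ) : ℝ := -(75*x^2 + 179*x + 104)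
def pG (q : ℝ × ℝ) : ℝ :=
  (4*q.2 - pA q.1)^2 + 8*(pB q.1)*(4*q.2 - pA q.1) - 16*q.1*(pB q.1)^2

lemma pG_contDiff : ContDiff ℝ (⊤ : ℕ∞) pG := by
  unfold pG pA pB
  fun_prop

lemma partial_y (a b : ℝ) :
    HasDerivAt (fun y => pG (a, y)) (8*(4*b - pA a) + 32*(pB a)) b := by
  have h1 : HasDerivAt (fun y : ℝ => 4*y - pA a) 4 b := by
    simpa using ((hasDerivAt_id b).const_mul (4:ℝ)).sub_const (pA a)
  have h2 : HasDerivAt (fun y : ℝ => (4*y - pA a)^2) (2*(4*b - pA a)*4) b := by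
    simpa using h1.fun_pow 2
  have h3 : HasDerivAt (fun y : ℝ => 8*(pB a)*(4*y - pA a)) (8*(pB a)*4) b :=
    h1.const_mul _
  have h4 := (h2.fun_add h3).sub_const (16*a*(pB a)^2)
  have : (fun y : ℝ => (4*y - pA a)^2 + 8*(pB a)*(4*y - pA a) - 16*a*(pB a)^2)
      = fun y => pG (a, y) := by
    funext y; simp [pG]
  rw [this] at h4
  exact h4.congr_deriv (by ring)

lemma fderiv_pG_apply (q : ℝ × ℝ) :
    fderiv ℝ pG q (0, 1) = 8*(4*q.2 - pA q.1) + 32*(pB q.1) := by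
  have hdiff : DifferentiableAt ℝ pG q :=
    (pG_contDiff.differentiable (by simp)) q
  have hcurve : HasDerivAt (fun y : ℝ => (q.1, y)) ((0:ℝ), (1:ℝ)) q.2 :=
    (hasDerivAt_const q.2 q.1).prodMk (hasDerivAt_id q.2)
  have hcomp : HasDerivAt (fun y : ℝ => pG (q.1, y)) (fderiv ℝ pG q (0, 1)) q.2 :=
    hdiff.hasFDerivAt.comp_hasDerivAt (f := fun y : ℝ => (q.1, y)) q.2 hcurve
  exact hcomp.unique (partial_y q.1 q.2)

/-- key identity: `pG` vanishes on the curve. -/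
lemma pG_Phi (s : ℝ) : pG (Phi s) = 0 := by
  simp only [pG, Phi, pA, pB, pU]
  ring

lemma fourY (s : ℝ) :
    4 * pU (s^2 + s) s = pA (s^2 + 2*s) + 4 * pB (s^2 + 2*s) * s := by
  simp only [pA, pB, pU]; ring

lemma pB_Phi (s : ℝ) :
    pB ((Phi s).1) = -((s+1)^2 * (75*(s+1)^2 + 29)) := by
  simp only [Phi, pB]; ring

/-- The parameterization `Φ` is injective, its derivative vanishes only at `s = -1`,
    and the curve `C = Φ(ℝ)` is smooth at every point except `(-1, 0) = Φ(-1)`. -/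
theorem Phi_injective_smooth :
    Function.Injective Phi ∧
    (∀ s : ℝ, deriv Phi s = 0 ↔ s = -1) ∧
    Phi (-1) = (-1, 0) ∧
    ∀ p ∈ Set.range Phi, p ≠ (-1, 0) → IsSmoothCurveAt (Set.range Phi) p := by
  have hinj : Function.Injective Phi := by
    intro s1 s2 h
    simp only [Phi, Prod.mk.injEq] at h
    obtain ⟨h1, h2⟩ := h
    have hfac : (s1 - s2) * (s1 + s2 + 2) = 0 := by linear_combination h1
    rcases mul_eq_zero.1 hfac with hc | hc
    · linarith
    · have hs2 : s2 = -2 - s1 := by linarith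
      subst hs2
      simp only [pU] at h2
      have key : (s1 + 1)^3 * (75*(s1+1)^2 + 29) = 0 := by
        linear_combination (-(1:ℝ)/2) * h2
      have hpos : (0:ℝ) < 75*(s1+1)^2 + 29 := by positivity
      have h3 : (s1 + 1)^3 = 0 := by
        rcases mul_eq_zero.1 key with h | h
        · exact h
        · linarith
      have : s1 + 1 = 0 := by
        exact pow_eq_zero_iff (by norm_num) |>.1 h3
      linarith
  have hderivPhi : ∀ s : ℝ, HasDerivAt Phi
      (2*s + 2, 206*s + 1446*s^2 + 3721*s^3 + 4695*s^4 + 3114*s^5 + 1050*s^6 + 150*s^7) s := by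
    intro s
    have hx : HasDerivAt (fun s : ℝ => s^2 + 2*s) (2*s + 2) s := by
      have := (hasDerivAt_pow 2 s).fun_add ((hasDerivAt_id s).const_mul 2)
      exact this.congr_deriv (by ring)
    have hyeq : (fun s : ℝ => pU (s^2 + s) s)
        = fun s : ℝ => (75/4)*s^8 + 150*s^7 + 519*s^6 + 939*s^5 + (3721/4)*s^4
            + 482*s^3 + 103*s^2 := by
      funext t; simp only [pU]; ring
    have hy : HasDerivAt (fun s : ℝ => pU (s^2 + s) s)
        (206*s + 1446*s^2 + 3721*s^3 + 4695*s^4 + 3114*s^5 + 1050*s^6 + 150*s^7) s := by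
      rw [hyeq]
      have h8 := (hasDerivAt_pow 8 s).const_mul (75/4 : ℝ)
      have h7 := (hasDerivAt_pow 7 s).const_mul (150 : ℝ)
      have h6 := (hasDerivAt_pow 6 s).const_mul (519 : ℝ)
      have h5 := (hasDerivAt_pow 5 s).const_mul (939 : ℝ)
      have h4 := (hasDerivAt_pow 4 s).const_mul (3721/4 : ℝ)
      have h3 := (hasDerivAt_pow 3 s).const_mul (482 : ℝ)
      have h2 := (hasDerivAt_pow 2 s).const_mul (103 : ℝ)
      have := ((((((h8.fun_add h7).fun_add h6).fun_add h5).fun_add h4).fun_add h3).fun_add h2)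
      exact this.congr_deriv (by ring)
    exact hx.prodMk hy
  refine ⟨hinj, ?_, ?_, ?_⟩
  · intro s
    constructor
    · intro h
      have hd := (hderivPhi s).deriv
      rw [hd] at h
      have := congrArg Prod.fst h
      simp at this
      linarith
    · intro h
      subst h
      have hd := (hderivPhi (-1)).deriv
      rw [hd]
      norm_num
  · simp only [Phi, pU]; norm_num
  · rintro p ⟨s, rfl⟩ hp
    have hs : s ≠ -1 := by
      rintro rfl
      apply hp
      simp only [Phi, pU]; norm_num
    have hs1 : s + 1 ≠ 0 := fun h => hs (by linarith)
    have hBne : pB ((Phi s).1) ≠ 0 := by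
      rw [pB_Phi]
      have h1 : (s+1)^2 > 0 := by positivity
      have h2 : (75*(s+1)^2 + 29) > 0 := by positivity
      nlinarith
    refine ⟨{q | pB q.1 ≠ 0 ∧ 8*(4*q.2 - pA q.1) + 32*(pB q.1) ≠ 0}, ?_, ?_, pG, pG_contDiff,
      ?_, ?_⟩
    · apply IsOpen.inter
      · have : Continuous fun q : ℝ × ℝ => pB q.1 := by unfold pB; fun_prop
        exact isOpen_compl_singleton.preimage this
      · have : Continuous fun q : ℝ × ℝ => 8*(4*q.2 - pA q.1) + 32*(pB q.1) := by
          unfold pA pB; fun_prop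
        exact isOpen_compl_singleton.preimage this
    · constructor
      · exact hBne
      · have h4y : 4*(Phi s).2 - pA ((Phi s).1) = 4 * pB ((Phi s).1) * s := by
          have := fourY s
          simp only [Phi]
          linarith [fourY s]
        have : 8*(4*(Phi s).2 - pA ((Phi s).1)) + 32*(pB ((Phi s).1))
            = 32 * pB ((Phi s).1) * (s + 1) := by
          rw [h4y]; ring
        rw [this]
        intro hzero
        rcases mul_eq_zero.1 hzero with h | h
        · rcases mul_eq_zero.1 h with h' | h'
          · norm_num at h'
          · exact hBne h'
        · exact hs1 h
    · intro q hq
      intro hzero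
      have := fderiv_pG_apply q
      rw [hzero] at this
      simp at this
      exact hq.2 this.symm
    · ext q
      simp only [Set.mem_inter_iff, Set.mem_setOf_eq, Set.mem_range]
      constructor
      · rintro ⟨⟨t, rfl⟩, hU⟩
        exact ⟨hU, pG_Phi t⟩
      · rintro ⟨⟨hB, hlin⟩, hg0⟩
        refine ⟨?_, hB, hlin⟩
        -- construct the parameter
        set x := q.1 with hxdef
        set y := q.2 with hydef
        set t := (4*y - pA x) / (4 * pB x) with htdef
        have h4B : (4 : ℝ) * pB x ≠ 0 := by
          intro h
          apply hB
          have : pB x = 0 := by linarith [h]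
          exact this
        have hw : 4 * pB x * t = 4*y - pA x := by
          rw [htdef]
          field_simp
        have hg0' : (4*y - pA x)^2 + 8*(pB x)*(4*y - pA x) - 16*x*(pB x)^2 = 0 := by
          simpa [pG] using hg0
        have key : 16*(pB x)^2 * (t^2 + 2*t - x) = 0 := by
          linear_combination (4*pB x*t + (4*y - pA x) + 8*pB x) * hw + hg0'
        have hB2 : (16:ℝ)*(pB x)^2 ≠ 0 := by
          intro h
          apply hB
          nlinarith [sq_nonneg (pB x)]
        have hx2 : t^2 + 2*t = x := by
          have := (mul_eq_zero.1 key).resolve_left hB2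
          linarith
        refine ⟨t, ?_⟩
        have hsnd : pU (t^2 + t) t = y := by
          have h1 := fourY t
          rw [hx2] at h1
          linarith [hw]
        show ((t^2 + 2*t, pU (t^2 + t) t) : ℝ × ℝ) = q
        rw [hx2, hsnd]
end
end
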